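/- arXiv:2207.03226 — 2 statements merged into one kernel-verified Lean document; each statement's English description precedes it below -/
import Mathlib

section
/- Let D ∈ ℕ, D ≥ 1, let X and Y be nonempty finite sets, and let (P_x)_{x∈X} and (Q_y)_{y∈Y} be PVMs on ℂ^D with P_x ≠ 0 and Q_y ≠ 0 for all x ∈ X and y ∈ Y. Then every POVM (G_{x,y})_{(x,y)∈X×Y} on ℂ^D can be generated through broadcasting from P and Q; moreover, a channel Φ achieving this can be chosen of measure-and-prepare form Φ(ρ) = Σ_{x∈X} Σ_{y∈Y} tr[ρ G_{x,y}] · (σ^{(1)}_x ⊗ σ^{(2)}_y), where σ^{(1)}_x and σ^{(2)}_y are any states (positive semidefinite trace-one matrices) satisfying σ^{(1)}_x ≤ P_x and σ^{(2)}_y ≤ Q_y in the Loewner order. -/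
open Kronecker Matrix
open scoped ComplexOrder

noncomputable section

/-- A linear map between matrix algebras is completely positive if it maps positive
semidefinite block matrices (with any finite number of blocks) to positive semidefinite
block matrices, blockwise. -/
def IsCPMap {m n : Type} [Fintype m] [DecidableEq m] [Fintype n] [DecidableEq n]
    (Φ : Matrix m m ℂ →ₗ[ℂ] Matrix n n ℂ) : Prop :=
  ∀ (k : ℕ) (A : Matrix (Fin k × m) (Fin k × m) ℂ), A.PosSemidef →
    (Matrix.of fun (p q : Fin k × n) =>
      Φ (Matrix.of fun a b => A (p.1, a) (q.1, b)) p.2 q.2).PosSemidef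

/-- A quantum channel: a trace-preserving completely positive linear map. -/
def IsChannel {m n : Type} [Fintype m] [DecidableEq m] [Fintype n] [DecidableEq n]
    (Φ : Matrix m m ℂ →ₗ[ℂ] Matrix n n ℂ) : Prop :=
  IsCPMap Φ ∧ ∀ ρ : Matrix m m ℂ, (Φ ρ).trace = ρ.trace

/-- A POVM with finite outcome set `X`: positive semidefinite effects summing to the identity. -/
def IsPOVM {X : Type} [Fintype X] {m : Type} [Fintype m] [DecidableEq m]
    (M : X → Matrix m m ℂ) : Prop :=
  (∀ x, (M x).PosSemidef) ∧ ∑ x, M x = 1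

/-- A PVM: a POVM all of whose effects are orthogonal projections. -/
def IsPVM {X : Type} [Fintype X] {m : Type} [Fintype m] [DecidableEq m]
    (M : X → Matrix m m ℂ) : Prop :=
  IsPOVM M ∧ ∀ x, (M x)ᴴ = M x ∧ M x * M x = M x

/-- `G` is generated through broadcasting from `M` and `N` if there is a channel `Φ`
such that `tr[Φ(ρ)(M x ⊗ N y)] = tr[ρ G x y]` for all `ρ, x, y`. -/
def GenByBroadcast {X Y : Type} [Fintype X] [Fintype Y]
    {d m n : Type} [Fintype d] [DecidableEq d] [Fintype m] [DecidableEq m]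
    [Fintype n] [DecidableEq n]
    (M : X → Matrix m m ℂ) (N : Y → Matrix n n ℂ)
    (G : X → Y → Matrix d d ℂ) : Prop :=
  ∃ Φ : Matrix d d ℂ →ₗ[ℂ] Matrix (m × n) (m × n) ℂ, IsChannel Φ ∧
    ∀ (ρ : Matrix d d ℂ) (x : X) (y : Y),
      (Φ ρ * (M x ⊗ₖ N y)).trace = (ρ * G x y).trace

/-! Measure `G` and, on outcome `(x, y)`, prepare `σ¹_x ⊗ σ²_y`. For a PVM, a state `σ ≤ P x'`
satisfies `σ * P x = δ_{x' x} σ`, so measuring `P ⊗ Q` on the prepared state returns `(x, y)`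
with certainty and the broadcast reproduces `G`. Complete positivity of the channel reduces to
positivity of the matrix `(tr (A_ij G))_ij` for a positive block matrix `A`, which is a partial
trace of a congruence of `A`. A state below a nonzero projection `P` is the normalized
projection onto a nonzero column of `P`. -/

open scoped MatrixOrder

section Projections

variable {n : Type} [Fintype n] [DecidableEq n]

lemma exists_state_le_of_isStarProjection {P : Matrix n n ℂ} (hP : IsStarProjection P)
    (hP0 : P ≠ 0) : ∃ σ : Matrix n n ℂ, σ.PosSemidef ∧ σ.trace = 1 ∧ σ ≤ P := by
  have hPsd : P.PosSemidef := nonneg_iff_posSemidef.mp hP.nonneg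
  obtain ⟨j, hj⟩ : ∃ j, P j j ≠ 0 := by
    by_contra! h
    exact hP0 (hPsd.trace_eq_zero_iff.mp (Finset.sum_eq_zero fun j _ => h j))
  have hPP : P * P = P := hP.isIdempotentElem.eq
  set E : Matrix n n ℂ := single j j 1
  have hEPE : E * P * E = P j j • E := by
    rw [single_mul_mul_single, one_mul, mul_one, smul_single, smul_eq_mul, mul_one]
  set σ := (P j j)⁻¹ • (P * E * P)
  have hσP : σ * P = σ := by simp only [σ, smul_mul, Matrix.mul_assoc, hPP]
  have hσ : IsStarProjection σ := by
    constructor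
    · calc σ * σ = ((P j j)⁻¹ * (P j j)⁻¹) • (P * (E * (P * P) * E) * P) := by
            simp only [σ, smul_mul_smul_comm, Matrix.mul_assoc]
        _ = σ := by
            rw [hPP, hEPE, Matrix.mul_smul, Matrix.smul_mul, smul_smul, inv_mul_cancel_right₀ hj]
    · have hc : star (P j j) = P j j := (IsSelfAdjoint.of_nonneg hPsd.diag_nonneg).star_eq
      simp only [IsSelfAdjoint, σ, star_smul, star_mul, hP.isSelfAdjoint.star_eq, star_inv₀, hc,
        E, star_eq_conjTranspose, conjTranspose_single, star_one, Matrix.mul_assoc]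
  refine ⟨σ, nonneg_iff_posSemidef.mp hσ.nonneg, ?_, hσ.le_of_mul_eq_left hP hσP⟩
  rw [trace_smul, trace_mul_comm, ← Matrix.mul_assoc, hPP, trace_mul_single, MulOpposite.op_one,
    one_smul, smul_eq_mul, inv_mul_cancel₀ hj]

variable {X : Type} [Fintype X] {P : X → Matrix n n ℂ}

lemma IsPVM.isStarProjection (hP : IsPVM P) (x : X) : IsStarProjection (P x) :=
  ⟨(hP.2 x).2, (hP.2 x).1⟩

lemma IsPVM.le_one_sub (hP : IsPVM P) {x x' : X} (h : x ≠ x') : P x' ≤ 1 - P x := by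
  classical
  rw [le_sub_iff_add_le', ← hP.1.2, ← Finset.sum_pair h]
  exact Finset.sum_le_sum_of_subset_of_nonneg (Finset.subset_univ _)
    fun z _ _ => (hP.isStarProjection z).nonneg

open scoped Matrix.Norms.L2Operator in
lemma IsPVM.mul_eq_ite [DecidableEq X] (hP : IsPVM P) {σ : Matrix n n ℂ} {x' : X}
    (hσ : σ.PosSemidef) (hσP : σ ≤ P x') (x : X) : σ * P x = if x' = x then σ else 0 := by
  split_ifs with h
  · subst h
    exact ((hP.isStarProjection x').mul_right_and_mul_left_of_nonneg_of_le hσ.nonneg hσP).1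
  · have := ((hP.isStarProjection x).one_sub.mul_right_and_mul_left_of_nonneg_of_le hσ.nonneg
      (hσP.trans (hP.le_one_sub (Ne.symm h)))).1
    rwa [Matrix.mul_sub, Matrix.mul_one, sub_eq_self] at this

lemma IsPVM.trace_mul_eq_ite [DecidableEq X] (hP : IsPVM P) {σ : Matrix n n ℂ} {x' : X}
    (hσ : σ.PosSemidef) (hσ1 : σ.trace = 1) (hσP : σ ≤ P x') (x : X) :
    (σ * P x).trace = if x' = x then 1 else 0 := by
  rw [hP.mul_eq_ite hσ hσP, apply_ite trace, hσ1, trace_zero]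

end Projections

/-- The `(i, j)` entry is `tr (A_ij Rᴴ R) = ∑ l, (R A_ij Rᴴ) l l` where `G = Rᴴ R`, so the
matrix is the partial trace of the positive matrix `(1 ⊗ R) A (1 ⊗ R)ᴴ`. -/
lemma Matrix.PosSemidef.trace_blocks_mul {k m : Type} [Fintype k] [DecidableEq k] [Fintype m]
    [DecidableEq m] {A : Matrix (k × m) (k × m) ℂ} (hA : A.PosSemidef) {G : Matrix m m ℂ}
    (hG : G.PosSemidef) :
    (Matrix.of fun i j : k => ((Matrix.of fun a b => A (i, a) (j, b)) * G).trace).PosSemidef := by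
  obtain ⟨R, rfl⟩ := CStarAlgebra.nonneg_iff_eq_star_mul_self.mp hG.nonneg
  set C := ((1 : Matrix k k ℂ) ⊗ₖ R) * A * ((1 : Matrix k k ℂ) ⊗ₖ R)ᴴ
  have hC : C.PosSemidef := hA.mul_mul_conjTranspose_same _
  have hCentry : ∀ i j l,
      C (i, l) (j, l) = ∑ a, ∑ b, A (i, a) (j, b) * (star (R l b) * R l a) := by
    intro i j l
    simp only [C, mul_apply, kroneckerMap_apply, one_apply, ite_mul, one_mul, zero_mul,
      Fintype.sum_prod_type, Finset.sum_ite_irrel, Finset.sum_const_zero, Finset.sum_ite_eq,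
      Finset.mem_univ, ↓reduceIte, conjTranspose_apply, RCLike.star_def,
      apply_ite (starRingEnd ℂ), map_zero, mul_ite, Finset.sum_mul, mul_zero]
    rw [Finset.sum_comm]
    exact Finset.sum_congr rfl fun a _ => Finset.sum_congr rfl fun b _ => by
      rw [starRingEnd_apply]; ring
  convert posSemidef_sum Finset.univ fun l _ => hC.submatrix fun i : k => (i, l) using 1
  ext i j
  simp only [Matrix.sum_apply, submatrix_apply, hCentry, of_apply, trace, diag_apply, mul_apply,
    star_eq_conjTranspose, conjTranspose_apply, Finset.mul_sum]
  conv_rhs => rw [Finset.sum_comm]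
  exact Finset.sum_congr rfl fun a _ => Finset.sum_comm

section MeasurePrepare

variable {ι m n : Type} [Fintype ι] [Fintype m]

def measurePrepare (G : ι → Matrix m m ℂ) (τ : ι → Matrix n n ℂ) :
    Matrix m m ℂ →ₗ[ℂ] Matrix n n ℂ :=
  ∑ i, ((traceLinearMap m ℂ ℂ) ∘ₗ LinearMap.mulRight ℂ (G i)).smulRight (τ i)

lemma measurePrepare_apply (G : ι → Matrix m m ℂ) (τ : ι → Matrix n n ℂ) (ρ : Matrix m m ℂ) :
    measurePrepare G τ ρ = ∑ i, (ρ * G i).trace • τ i := by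
  simp [measurePrepare]

lemma trace_measurePrepare_mul [Fintype n] [DecidableEq ι] (G : ι → Matrix m m ℂ)
    {τ E : ι → Matrix n n ℂ} (hτE : ∀ i j, (τ i * E j).trace = if i = j then 1 else 0)
    (ρ : Matrix m m ℂ) (j : ι) : (measurePrepare G τ ρ * E j).trace = (ρ * G j).trace := by
  simp [measurePrepare_apply, Matrix.sum_mul, trace_sum, hτE]

lemma trace_measurePrepare [DecidableEq m] [Fintype n] {G : ι → Matrix m m ℂ}
    {τ : ι → Matrix n n ℂ} (hG : ∑ i, G i = 1) (hτ : ∀ i, (τ i).trace = 1) (ρ : Matrix m m ℂ) :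
    (measurePrepare G τ ρ).trace = ρ.trace := by
  simp only [measurePrepare_apply, trace_sum, trace_smul, hτ, smul_eq_mul, mul_one]
  rw [← trace_sum, ← Matrix.mul_sum, hG, Matrix.mul_one]

variable [DecidableEq m] [Fintype n] [DecidableEq n]

lemma isCPMap_measurePrepare {G : ι → Matrix m m ℂ} {τ : ι → Matrix n n ℂ}
    (hG : ∀ i, (G i).PosSemidef) (hτ : ∀ i, (τ i).PosSemidef) : IsCPMap (measurePrepare G τ) := by
  intro k A hA
  have hblocks : (Matrix.of fun p q : Fin k × n =>
      measurePrepare G τ (Matrix.of fun a b => A (p.1, a) (q.1, b)) p.2 q.2) =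
      ∑ i, (Matrix.of fun i' j' : Fin k =>
        ((Matrix.of fun a b => A (i', a) (j', b)) * G i).trace) ⊗ₖ τ i := by
    ext p q
    simp [measurePrepare_apply, Matrix.sum_apply]
  rw [hblocks]
  exact posSemidef_sum _ fun i _ => (hA.trace_blocks_mul (hG i)).kronecker (hτ i)

lemma isChannel_measurePrepare {G : ι → Matrix m m ℂ} {τ : ι → Matrix n n ℂ} (hG : IsPOVM G)
    (hτ : ∀ i, (τ i).PosSemidef ∧ (τ i).trace = 1) : IsChannel (measurePrepare G τ) :=
  ⟨isCPMap_measurePrepare hG.1 fun i => (hτ i).1, trace_measurePrepare hG.2 fun i => (hτ i).2⟩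

end MeasurePrepare

lemma measurePrepare_kronecker_broadcasts {X Y d n : Type} [Fintype X] [Fintype Y] [Fintype d]
    [DecidableEq d] [Fintype n] [DecidableEq n] {P : X → Matrix n n ℂ} {Q : Y → Matrix n n ℂ}
    (hP : IsPVM P) (hQ : IsPVM Q) {G : X × Y → Matrix d d ℂ} (hG : IsPOVM G)
    {σ₁ : X → Matrix n n ℂ} {σ₂ : Y → Matrix n n ℂ}
    (hσ₁ : ∀ x, (σ₁ x).PosSemidef ∧ (σ₁ x).trace = 1 ∧ σ₁ x ≤ P x)
    (hσ₂ : ∀ y, (σ₂ y).PosSemidef ∧ (σ₂ y).trace = 1 ∧ σ₂ y ≤ Q y) :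
    IsChannel (measurePrepare G fun p => σ₁ p.1 ⊗ₖ σ₂ p.2) ∧
      ∀ ρ x y, (measurePrepare G (fun p => σ₁ p.1 ⊗ₖ σ₂ p.2) ρ * (P x ⊗ₖ Q y)).trace =
        (ρ * G (x, y)).trace := by
  classical
  refine ⟨isChannel_measurePrepare hG fun p => ⟨(hσ₁ p.1).1.kronecker (hσ₂ p.2).1, ?_⟩,
    fun ρ x y => trace_measurePrepare_mul (E := fun p => P p.1 ⊗ₖ Q p.2) G (fun p q => ?_) ρ (x, y)⟩
  · rw [trace_kronecker, (hσ₁ p.1).2.1, (hσ₂ p.2).2.1, mul_one]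
  · rw [← mul_kronecker_mul, trace_kronecker, hP.trace_mul_eq_ite (hσ₁ p.1).1 (hσ₁ p.1).2.1
      (hσ₁ p.1).2.2, hQ.trace_mul_eq_ite (hσ₂ p.2).1 (hσ₂ p.2).2.1 (hσ₂ p.2).2.2,
      ite_zero_mul_ite_zero, mul_one]
    simp only [Prod.ext_iff]

theorem statement6_general (D : ℕ) (X Y : Type) [Fintype X] [Fintype Y]
    (P : X → Matrix (Fin D) (Fin D) ℂ) (Q : Y → Matrix (Fin D) (Fin D) ℂ)
    (hP : IsPVM P) (hQ : IsPVM Q)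
    (hPne : ∀ x, P x ≠ 0) (hQne : ∀ y, Q y ≠ 0)
    (G : X → Y → Matrix (Fin D) (Fin D) ℂ)
    (hG : IsPOVM fun pr : X × Y => G pr.1 pr.2) :
    GenByBroadcast P Q G ∧
    ∀ (σ₁ : X → Matrix (Fin D) (Fin D) ℂ) (σ₂ : Y → Matrix (Fin D) (Fin D) ℂ),
      (∀ x, (σ₁ x).PosSemidef ∧ (σ₁ x).trace = 1 ∧ (P x - σ₁ x).PosSemidef) →
      (∀ y, (σ₂ y).PosSemidef ∧ (σ₂ y).trace = 1 ∧ (Q y - σ₂ y).PosSemidef) →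
      ∃ Φ : Matrix (Fin D) (Fin D) ℂ →ₗ[ℂ] Matrix (Fin D × Fin D) (Fin D × Fin D) ℂ,
        IsChannel Φ ∧
        (∀ ρ : Matrix (Fin D) (Fin D) ℂ,
          Φ ρ = ∑ x, ∑ y, (ρ * G x y).trace • (σ₁ x ⊗ₖ σ₂ y)) ∧
        ∀ (ρ : Matrix (Fin D) (Fin D) ℂ) (x : X) (y : Y),
          (Φ ρ * (P x ⊗ₖ Q y)).trace = (ρ * G x y).trace := by
  refine ⟨?_, fun σ₁ σ₂ hσ₁ hσ₂ => ?_⟩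
  · choose σ₁ hσ₁ using fun x =>
      exists_state_le_of_isStarProjection (hP.isStarProjection x) (hPne x)
    choose σ₂ hσ₂ using fun y =>
      exists_state_le_of_isStarProjection (hQ.isStarProjection y) (hQne y)
    exact ⟨_, measurePrepare_kronecker_broadcasts hP hQ hG hσ₁ hσ₂⟩
  · obtain ⟨hΦ, hΦPQ⟩ := measurePrepare_kronecker_broadcasts hP hQ hG hσ₁ hσ₂
    exact ⟨_, hΦ, fun ρ => by rw [measurePrepare_apply, Fintype.sum_prod_type], hΦPQ⟩

/-- Remark `rem:measandprep`: any POVM `G` can be generated through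
broadcasting from PVMs `P`, `Q` with nonvanishing effects; moreover the broadcasting
channel can be chosen of measure-and-prepare form
`Φ(ρ) = Σ_{x,y} tr[ρ G_{x,y}] σ¹_x ⊗ σ²_y` for any states `σ¹_x ≤ P_x`, `σ²_y ≤ Q_y`. -/
theorem statement6 (D : ℕ) (hD : 1 ≤ D) (X Y : Type) [Fintype X] [Nonempty X]
    [Fintype Y] [Nonempty Y]
    (P : X → Matrix (Fin D) (Fin D) ℂ) (Q : Y → Matrix (Fin D) (Fin D) ℂ)
    (hP : IsPVM P) (hQ : IsPVM Q)
    (hPne : ∀ x, P x ≠ 0) (hQne : ∀ y, Q y ≠ 0)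
    (G : X → Y → Matrix (Fin D) (Fin D) ℂ)
    (hG : IsPOVM fun pr : X × Y => G pr.1 pr.2) :
    GenByBroadcast P Q G ∧
    ∀ (σ₁ : X → Matrix (Fin D) (Fin D) ℂ) (σ₂ : Y → Matrix (Fin D) (Fin D) ℂ),
      (∀ x, (σ₁ x).PosSemidef ∧ (σ₁ x).trace = 1 ∧ (P x - σ₁ x).PosSemidef) →
      (∀ y, (σ₂ y).PosSemidef ∧ (σ₂ y).trace = 1 ∧ (Q y - σ₂ y).PosSemidef) →
      ∃ Φ : Matrix (Fin D) (Fin D) ℂ →ₗ[ℂ] Matrix (Fin D × Fin D) (Fin D × Fin D) ℂ,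
        IsChannel Φ ∧
        (∀ ρ : Matrix (Fin D) (Fin D) ℂ,
          Φ ρ = ∑ x, ∑ y, (ρ * G x y).trace • (σ₁ x ⊗ₖ σ₂ y)) ∧
        ∀ (ρ : Matrix (Fin D) (Fin D) ℂ) (x : X) (y : Y),
          (Φ ρ * (P x ⊗ₖ Q y)).trace = (ρ * G x y).trace :=
  statement6_general D X Y P Q hP hQ hPne hQne G hG
end
end

section
/- Let 𝒳 and 𝒴 be finite groups, 𝒢 := 𝒳 × 𝒴, and D, D₁, D₂ ∈ ℕ positive. Let U: 𝒢 → U(D₁), V: 𝒢 → U(D₂), W: 𝒢 → U(D) be projective unitary representations. Let 𝒢 act on 𝒳 by (x',y')·x := x'x and on 𝒴 by (x',y')·y := y'y. Let (M_x)_{x∈𝒳} be a (U,𝒳)-covariant POVM on ℂ^{D₁}, (N_y)_{y∈𝒴} a (V,𝒴)-covariant POVM on ℂ^{D₂}, and (G_g)_{g∈𝒢} a (W,𝒢)-covariant POVM on ℂ^D (with 𝒢 acting on itself by left multiplication). Then G can be generated through broadcasting from M and N if and only if there exists a (W, U⊗V)-covariant channel Φ (Φ(W(g) ρ W(g)*)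 = (U(g)⊗V(g)) Φ(ρ) (U(g)⊗V(g))* for all g, ρ) such that tr[Φ(ρ)(M_{e₁} ⊗ N_{e₂})] = tr[ρ G_{(e₁,e₂)}] for all ρ, where e₁, e₂ are the neutral elements of 𝒳, 𝒴. -/
/-!
Both directions rest on the observation that, for `g = (x, y)`, covariance makes
`M x ⊗ N y` and `G (x, y)` the conjugates of `M 1 ⊗ N 1` and `G 1` by `U g ⊗ V g` and `W g`.
Hence a `(W, U ⊗ V)`-covariant channel that reproduces `G 1` reproduces every `G (x, y)`.
Conversely, twirling a broadcasting channel `Φ`, i.e. averaging `Φ` conjugated by `W g` on the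
input and by `U g ⊗ V g` on the output over all `g`, gives a channel that is covariant: the
projective phases cancel in every conjugation, and reindexing the average absorbs the
conjugation by `g`. The twirl still reproduces `G 1`, since every term does.
-/

open Kronecker Matrix
open scoped ComplexOrder

noncomputable section

/-- A projective unitary representation of a group together with its multiplier. -/
def IsProjRep {G : Type} [Group G] {d : Type} [Fintype d] [DecidableEq d]
    (U : G → Matrix d d ℂ) (mult : G → G → ℂ) : Prop :=
  U 1 = 1 ∧ (∀ g, (U g)ᴴ * U g = 1 ∧ U g * (U g)ᴴ = 1) ∧
  (∀ g h, ‖mult g h‖ = 1) ∧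
  (∀ g, mult 1 g = 1) ∧ (∀ g, mult g 1 = 1) ∧
  (∀ g h k, mult g h * mult (g * h) k = mult g (h * k) * mult h k) ∧
  (∀ g h, U (g * h) = mult g h • (U g * U h))

section MatrixConjugation

variable {m n : Type}

lemma conj_conj_of_mul_eq_one {α : Type*} [Semiring α] [Fintype m] [DecidableEq m]
    {P Q : Matrix m m α} (h : Q * P = 1) (A : Matrix m m α) : Q * (P * A * Q) * P = A := by
  simp only [← Matrix.mul_assoc, h, Matrix.one_mul]
  rw [Matrix.mul_assoc, h, Matrix.mul_one]

lemma trace_mul_conj {α : Type*} [CommSemiring α] [StarRing α] [Fintype m]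
    (A B P : Matrix m m α) :
    (A * (P * B * Pᴴ)).trace = (Pᴴ * A * P * B).trace := by
  rw [← Matrix.mul_assoc, Matrix.trace_mul_cycle, Matrix.mul_assoc _ P B, ← Matrix.mul_assoc]

lemma smul_mul_mul_conjTranspose_smul [Fintype m] {c : ℂ} (hc : ‖c‖ = 1) (B : Matrix n m ℂ)
    (A : Matrix m m ℂ) : (c • B) * A * (c • B)ᴴ = B * A * Bᴴ := by
  have hc' : c * star c = 1 := by rw [Complex.star_def, Complex.mul_conj', hc]; norm_num
  rw [conjTranspose_smul, Matrix.smul_mul, Matrix.smul_mul, Matrix.mul_smul, smul_smul, hc',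
    one_smul]

lemma conjTranspose_smul_mul_mul_smul [Fintype n] {c : ℂ} (hc : ‖c‖ = 1) (B : Matrix n m ℂ)
    (A : Matrix n n ℂ) : (c • B)ᴴ * A * (c • B) = Bᴴ * A * B := by
  simpa using smul_mul_mul_conjTranspose_smul (c := star c) (by simpa using hc) Bᴴ A

def conjMap [Fintype m] (B : Matrix n m ℂ) : Matrix m m ℂ →ₗ[ℂ] Matrix n n ℂ where
  toFun ρ := B * ρ * Bᴴ
  map_add' ρ σ := by simp [Matrix.mul_add, Matrix.add_mul]
  map_smul' c ρ := by simp [Matrix.mul_smul, Matrix.smul_mul]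

@[simp] lemma conjMap_apply [Fintype m] (B : Matrix n m ℂ) (ρ : Matrix m m ℂ) :
    conjMap B ρ = B * ρ * Bᴴ := rfl

end MatrixConjugation

section CompletelyPositive

variable {m n d : Type} [Fintype m]

/-- The block matrix `(Φ A_{ij})_{ij}` of the definition of `IsCPMap`. Bundling it as linear in `Φ`
reduces closure of `IsCPMap` under sums and nonnegative multiples to that of the PSD cone. -/
def ampliate (k : ℕ) (A : Matrix (Fin k × m) (Fin k × m) ℂ) :
    (Matrix m m ℂ →ₗ[ℂ] Matrix n n ℂ) →ₗ[ℂ] Matrix (Fin k × n) (Fin k × n) ℂ where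
  toFun Φ := Matrix.of fun p q => Φ (Matrix.of fun a b => A (p.1, a) (q.1, b)) p.2 q.2
  map_add' Φ Ψ := by ext; simp
  map_smul' c Φ := by ext; simp

lemma ampliate_conjMap (k : ℕ) (A : Matrix (Fin k × m) (Fin k × m) ℂ) (B : Matrix n m ℂ) :
    ampliate k A (conjMap B) = ((1 : Matrix (Fin k) (Fin k) ℂ) ⊗ₖ B) * A *
      ((1 : Matrix (Fin k) (Fin k) ℂ) ⊗ₖ B)ᴴ := by
  ext ⟨i, a⟩ ⟨j, b⟩
  simp only [ampliate, LinearMap.coe_mk, AddHom.coe_mk, of_apply, conjMap_apply, mul_apply,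
    conjTranspose_apply, kroneckerMap_apply, Fintype.sum_prod_type, one_apply,
    apply_ite (star : ℂ → ℂ), star_zero, ite_mul, mul_ite, mul_zero, zero_mul, one_mul]
  simp only [Finset.sum_ite_irrel, Finset.sum_const_zero, Finset.sum_ite_eq, Finset.mem_univ,
    if_true, Finset.sum_mul]

variable [DecidableEq m] [Fintype n] [DecidableEq n]

lemma isCPMap_iff_ampliate {Φ : Matrix m m ℂ →ₗ[ℂ] Matrix n n ℂ} :
    IsCPMap Φ ↔ ∀ k A, A.PosSemidef → (ampliate k A Φ).PosSemidef :=
  Iff.rfl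

lemma isCPMap_conjMap (B : Matrix n m ℂ) : IsCPMap (conjMap B) :=
  isCPMap_iff_ampliate.mpr fun k A hA => by
    rw [ampliate_conjMap]
    exact hA.mul_mul_conjTranspose_same _

lemma IsCPMap.comp [Fintype d] [DecidableEq d] {Φ : Matrix d d ℂ →ₗ[ℂ] Matrix n n ℂ}
    {Ψ : Matrix m m ℂ →ₗ[ℂ] Matrix d d ℂ} (hΦ : IsCPMap Φ) (hΨ : IsCPMap Ψ) :
    IsCPMap (Φ ∘ₗ Ψ) :=
  fun k A hA => hΦ k _ (hΨ k A hA)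

lemma isCPMap_sum {ι : Type} (s : Finset ι) {Φ : ι → Matrix m m ℂ →ₗ[ℂ] Matrix n n ℂ}
    (h : ∀ i ∈ s, IsCPMap (Φ i)) : IsCPMap (∑ i ∈ s, Φ i) :=
  isCPMap_iff_ampliate.mpr fun k A hA => by
    rw [map_sum]
    exact posSemidef_sum s fun i hi => h i hi k A hA

lemma IsCPMap.smul {Φ : Matrix m m ℂ →ₗ[ℂ] Matrix n n ℂ} (hΦ : IsCPMap Φ) {c : ℂ} (hc : 0 ≤ c) :
    IsCPMap (c • Φ) :=
  isCPMap_iff_ampliate.mpr fun k A hA => by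
    rw [map_smul]
    exact (hΦ k A hA).smul hc

end CompletelyPositive

namespace IsProjRep

variable {G : Type} [Group G] {m n : Type} [Fintype m] [DecidableEq m] [Fintype n] [DecidableEq n]
  {U : G → Matrix m m ℂ} {mU : G → G → ℂ}

lemma conjTranspose_mul_self (hU : IsProjRep U mU) (g : G) : (U g)ᴴ * U g = 1 :=
  (hU.2.1 g).1

lemma mul_conjTranspose_self (hU : IsProjRep U mU) (g : G) : U g * (U g)ᴴ = 1 :=
  (hU.2.1 g).2

lemma conj_mul (hU : IsProjRep U mU) (g h : G) (A : Matrix m m ℂ) :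
    U (g * h) * A * (U (g * h))ᴴ = U g * (U h * A * (U h)ᴴ) * (U g)ᴴ := by
  obtain ⟨-, -, hnorm, -, -, -, hmul⟩ := hU
  rw [hmul, smul_mul_mul_conjTranspose_smul (hnorm g h)]
  simp only [conjTranspose_mul, Matrix.mul_assoc]

lemma conjTranspose_conj_mul (hU : IsProjRep U mU) (g h : G) (A : Matrix m m ℂ) :
    (U (g * h))ᴴ * A * U (g * h) = (U h)ᴴ * ((U g)ᴴ * A * U g) * U h := by
  obtain ⟨-, -, hnorm, -, -, -, hmul⟩ := hU
  rw [hmul, conjTranspose_smul_mul_mul_smul (hnorm g h)]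
  simp only [conjTranspose_mul, Matrix.mul_assoc]

lemma kronecker {V : G → Matrix n n ℂ} {mV : G → G → ℂ} (hU : IsProjRep U mU)
    (hV : IsProjRep V mV) :
    IsProjRep (fun g => U g ⊗ₖ V g) (fun g h => mU g h * mV g h) := by
  obtain ⟨hU1, hUu, hUn, hUl, hUr, hUc, hUm⟩ := hU
  obtain ⟨hV1, hVu, hVn, hVl, hVr, hVc, hVm⟩ := hV
  refine ⟨?_, fun g => ⟨?_, ?_⟩, fun g h => ?_, fun g => ?_, fun g => ?_, fun g h k => ?_,
    fun g h => ?_⟩ <;> dsimp only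
  · rw [hU1, hV1, one_kronecker_one]
  · rw [conjTranspose_kronecker, ← mul_kronecker_mul, (hUu g).1, (hVu g).1, one_kronecker_one]
  · rw [conjTranspose_kronecker, ← mul_kronecker_mul, (hUu g).2, (hVu g).2, one_kronecker_one]
  · rw [norm_mul, hUn, hVn, one_mul]
  · rw [hUl, hVl, one_mul]
  · rw [hUr, hVr, one_mul]
  · rw [mul_mul_mul_comm, hUc, hVc, mul_mul_mul_comm]
  · rw [hUm, hVm, smul_kronecker, kronecker_smul, smul_smul, mul_kronecker_mul]

end IsProjRep

section Covariance

variable {G : Type} {d n : Type} [Fintype d] [DecidableEq d] [Fintype n] [DecidableEq n]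
  {W : G → Matrix d d ℂ} {K : G → Matrix n n ℂ}

def IsCovariant (W : G → Matrix d d ℂ) (K : G → Matrix n n ℂ)
    (Φ : Matrix d d ℂ →ₗ[ℂ] Matrix n n ℂ) : Prop :=
  ∀ g ρ, Φ (W g * ρ * (W g)ᴴ) = K g * Φ ρ * (K g)ᴴ

lemma IsCovariant.trace_mul_conj {Φ : Matrix d d ℂ →ₗ[ℂ] Matrix n n ℂ} (hΦ : IsCovariant W K Φ)
    (hW : ∀ g, W g * (W g)ᴴ = 1) (hK : ∀ g, (K g)ᴴ * K g = 1) {E : Matrix n n ℂ}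
    {F : Matrix d d ℂ} (h : ∀ ρ, (Φ ρ * E).trace = (ρ * F).trace) (g : G) (ρ : Matrix d d ℂ) :
    (Φ ρ * (K g * E * (K g)ᴴ)).trace = (ρ * (W g * F * (W g)ᴴ)).trace := by
  have hconj : (K g)ᴴ * Φ ρ * K g = Φ ((W g)ᴴ * ρ * W g) :=
    calc (K g)ᴴ * Φ ρ * K g = (K g)ᴴ * Φ (W g * ((W g)ᴴ * ρ * W g) * (W g)ᴴ) * K g := by
          rw [conj_conj_of_mul_eq_one (hW g)]
      _ = Φ ((W g)ᴴ * ρ * W g) := by rw [hΦ, conj_conj_of_mul_eq_one (hK g)]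
  rw [_root_.trace_mul_conj, hconj, h, _root_.trace_mul_conj]

end Covariance

section Twirl

variable {G : Type} [Fintype G] {d n : Type} [Fintype d] [Fintype n]

def twirl (W : G → Matrix d d ℂ) (K : G → Matrix n n ℂ)
    (Φ : Matrix d d ℂ →ₗ[ℂ] Matrix n n ℂ) : Matrix d d ℂ →ₗ[ℂ] Matrix n n ℂ :=
  (Fintype.card G : ℂ)⁻¹ • ∑ g, conjMap (K g)ᴴ ∘ₗ Φ ∘ₗ conjMap (W g)

variable {W : G → Matrix d d ℂ} {K : G → Matrix n n ℂ} {Φ : Matrix d d ℂ →ₗ[ℂ] Matrix n n ℂ}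

lemma twirl_apply (ρ : Matrix d d ℂ) :
    twirl W K Φ ρ = (Fintype.card G : ℂ)⁻¹ • ∑ g, (K g)ᴴ * Φ (W g * ρ * (W g)ᴴ) * K g := by
  simp [twirl, LinearMap.sum_apply]

lemma trace_twirl_mul [Nonempty G] {E : Matrix n n ℂ} {F : Matrix d d ℂ}
    (h : ∀ g ρ, (Φ (W g * ρ * (W g)ᴴ) * (K g * E * (K g)ᴴ)).trace = (ρ * F).trace)
    (ρ : Matrix d d ℂ) : (twirl W K Φ ρ * E).trace = (ρ * F).trace := by
  have hterm : ∀ g, ((K g)ᴴ * Φ (W g * ρ * (W g)ᴴ) * K g * E).trace = (ρ * F).trace :=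
    fun g => by rw [← trace_mul_conj, h]
  rw [twirl_apply, Matrix.smul_mul, trace_smul, Finset.sum_mul, trace_sum]
  simp only [hterm, Finset.sum_const, Finset.card_univ, nsmul_eq_mul, smul_eq_mul]
  field_simp

variable [DecidableEq d] [DecidableEq n]

lemma IsCPMap.twirl (hΦ : IsCPMap Φ) : IsCPMap (twirl W K Φ) :=
  (isCPMap_sum _ fun g _ => (isCPMap_conjMap _).comp (hΦ.comp (isCPMap_conjMap _))).smul
    (by positivity)

lemma IsChannel.twirl [Nonempty G] (hΦ : IsChannel Φ) (hW : ∀ g, (W g)ᴴ * W g = 1)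
    (hK : ∀ g, K g * (K g)ᴴ = 1) : IsChannel (twirl W K Φ) := by
  refine ⟨hΦ.1.twirl, fun ρ => ?_⟩
  have htrace := trace_twirl_mul (W := W) (K := K) (Φ := Φ) (E := 1) (F := 1) (fun g ρ => by
    rw [Matrix.mul_one, hK, Matrix.mul_one, Matrix.mul_one, hΦ.2, trace_mul_cycle, hW,
      Matrix.one_mul]) ρ
  simpa using htrace

lemma isCovariant_twirl [Group G] {mW mK : G → G → ℂ} (hW : IsProjRep W mW)
    (hK : IsProjRep K mK) : IsCovariant W K (twirl W K Φ) := by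
  intro g ρ
  rw [twirl_apply, twirl_apply, Matrix.mul_smul, Matrix.smul_mul, Finset.mul_sum, Finset.sum_mul]
  congr 1
  refine Fintype.sum_equiv (Equiv.mulRight g) _ _ fun x => ?_
  rw [Equiv.coe_mulRight, ← hW.conj_mul, hK.conjTranspose_conj_mul,
    conj_conj_of_mul_eq_one (hK.mul_conjTranspose_self g)]

end Twirl

theorem statement14_general (𝒳 𝒴 : Type) [Group 𝒳] [Group 𝒴] [Fintype 𝒳] [Fintype 𝒴]
    (D D₁ D₂ : ℕ)
    (U : 𝒳 × 𝒴 → Matrix (Fin D₁) (Fin D₁) ℂ) (mU : (𝒳 × 𝒴) → (𝒳 × 𝒴) → ℂ)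
    (hU : IsProjRep U mU)
    (V : 𝒳 × 𝒴 → Matrix (Fin D₂) (Fin D₂) ℂ) (mV : (𝒳 × 𝒴) → (𝒳 × 𝒴) → ℂ)
    (hV : IsProjRep V mV)
    (W : 𝒳 × 𝒴 → Matrix (Fin D) (Fin D) ℂ) (mW : (𝒳 × 𝒴) → (𝒳 × 𝒴) → ℂ)
    (hW : IsProjRep W mW)
    (M : 𝒳 → Matrix (Fin D₁) (Fin D₁) ℂ)
    (hMcov : ∀ (g : 𝒳 × 𝒴) (x : 𝒳), U g * M x * (U g)ᴴ = M (g.1 * x))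
    (N : 𝒴 → Matrix (Fin D₂) (Fin D₂) ℂ)
    (hNcov : ∀ (g : 𝒳 × 𝒴) (y : 𝒴), V g * N y * (V g)ᴴ = N (g.2 * y))
    (G : 𝒳 × 𝒴 → Matrix (Fin D) (Fin D) ℂ)
    (hGcov : ∀ g h : 𝒳 × 𝒴, W g * G h * (W g)ᴴ = G (g * h)) :
    GenByBroadcast M N (fun x y => G (x, y)) ↔
    ∃ Φ : Matrix (Fin D) (Fin D) ℂ →ₗ[ℂ] Matrix (Fin D₁ × Fin D₂) (Fin D₁ × Fin D₂) ℂ,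
      IsChannel Φ ∧
      (∀ (g : 𝒳 × 𝒴) (ρ : Matrix (Fin D) (Fin D) ℂ),
        Φ (W g * ρ * (W g)ᴴ) = (U g ⊗ₖ V g) * Φ ρ * (U g ⊗ₖ V g)ᴴ) ∧
      ∀ ρ : Matrix (Fin D) (Fin D) ℂ,
        (Φ ρ * (M 1 ⊗ₖ N 1)).trace = (ρ * G 1).trace := by
  have hK := hU.kronecker hV
  have hMN (g : 𝒳 × 𝒴) : (U g ⊗ₖ V g) * (M 1 ⊗ₖ N 1) * (U g ⊗ₖ V g)ᴴ = M g.1 ⊗ₖ N g.2 := by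
    rw [conjTranspose_kronecker, ← mul_kronecker_mul, ← mul_kronecker_mul, hMcov, hNcov,
      mul_one, mul_one]
  have hG (g : 𝒳 × 𝒴) : W g * G 1 * (W g)ᴴ = G g := by rw [hGcov, mul_one]
  constructor
  · rintro ⟨Φ, hΦ, hbroad⟩
    refine ⟨twirl W _ Φ, hΦ.twirl hW.conjTranspose_mul_self hK.mul_conjTranspose_self,
      isCovariant_twirl hW hK, trace_twirl_mul fun g ρ => ?_⟩
    have hbroad_g := hbroad (W g * ρ * (W g)ᴴ) g.1 g.2
    simp only [Prod.mk.eta] at hbroad_g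
    rw [hMN, hbroad_g, ← hG g, trace_mul_conj,
      conj_conj_of_mul_eq_one (hW.conjTranspose_mul_self g)]
  · rintro ⟨Φ, hΦ, hcov, htr⟩
    refine ⟨Φ, hΦ, fun ρ x y => ?_⟩
    simpa only [hMN, hG] using IsCovariant.trace_mul_conj hcov hW.mul_conjTranspose_self
      hK.conjTranspose_mul_self htr (x, y) ρ

/-- for `𝒢 = 𝒳 × 𝒴` acting on `𝒳` via the first factor and on `𝒴` via
the second, a `(W,𝒢)`-covariant POVM `G` can be generated through broadcasting from a
`(U,𝒳)`-covariant `M` and a `(V,𝒴)`-covariant `N` iff there is a `(W, U⊗V)`-covariant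
channel `Φ` with `tr[Φ(ρ)(M_{e₁} ⊗ N_{e₂})] = tr[ρ G_e]` for all `ρ`. -/
theorem statement14 (𝒳 𝒴 : Type) [Group 𝒳] [Group 𝒴] [Fintype 𝒳] [Fintype 𝒴]
    (D D₁ D₂ : ℕ) (hD : 0 < D) (hD₁ : 0 < D₁) (hD₂ : 0 < D₂)
    (U : 𝒳 × 𝒴 → Matrix (Fin D₁) (Fin D₁) ℂ) (mU : (𝒳 × 𝒴) → (𝒳 × 𝒴) → ℂ)
    (hU : IsProjRep U mU)
    (V : 𝒳 × 𝒴 → Matrix (Fin D₂) (Fin D₂) ℂ) (mV : (𝒳 × 𝒴) → (𝒳 × 𝒴) → ℂ)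
    (hV : IsProjRep V mV)
    (W : 𝒳 × 𝒴 → Matrix (Fin D) (Fin D) ℂ) (mW : (𝒳 × 𝒴) → (𝒳 × 𝒴) → ℂ)
    (hW : IsProjRep W mW)
    (M : 𝒳 → Matrix (Fin D₁) (Fin D₁) ℂ) (hM : IsPOVM M)
    (hMcov : ∀ (g : 𝒳 × 𝒴) (x : 𝒳), U g * M x * (U g)ᴴ = M (g.1 * x))
    (N : 𝒴 → Matrix (Fin D₂) (Fin D₂) ℂ) (hN : IsPOVM N)
    (hNcov : ∀ (g : 𝒳 × 𝒴) (y : 𝒴), V g * N y * (V g)ᴴ = N (g.2 * y))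
    (G : 𝒳 × 𝒴 → Matrix (Fin D) (Fin D) ℂ) (hG : IsPOVM G)
    (hGcov : ∀ g h : 𝒳 × 𝒴, W g * G h * (W g)ᴴ = G (g * h)) :
    GenByBroadcast M N (fun x y => G (x, y)) ↔
    ∃ Φ : Matrix (Fin D) (Fin D) ℂ →ₗ[ℂ] Matrix (Fin D₁ × Fin D₂) (Fin D₁ × Fin D₂) ℂ,
      IsChannel Φ ∧
      (∀ (g : 𝒳 × 𝒴) (ρ : Matrix (Fin D) (Fin D) ℂ),
        Φ (W g * ρ * (W g)ᴴ) = (U g ⊗ₖ V g) * Φ ρ * (U g ⊗ₖ V g)ᴴ) ∧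
      ∀ ρ : Matrix (Fin D) (Fin D) ℂ,
        (Φ ρ * (M 1 ⊗ₖ N 1)).trace = (ρ * G 1).trace :=
  statement14_general 𝒳 𝒴 D D₁ D₂ U mU hU V mV hV W mW hW M hMcov N hNcov G hGcov
end
end
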